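/- Let c ≥ 2, τ ∈ (1, 3/2], r(x) = -τx/(1 + 0.5(1 - 2/c²)x), and B(x) = (1/r(x))·∫_{-r(x)}^0 r(s) ds for x > 0. Then B is strictly decreasing on (0, ∞). -/

import Mathlib

noncomputable def r (c τ x : ℝ) : ℝ := -τ * x / (1 + 0.5 * (1 - 2/c^2) * x)
noncomputable def B (c τ x : ℝ) : ℝ := (1 / r c τ x) * ∫ s in (-r c τ x)..0, r c τ s

lemma log_phi_strictAnti : StrictAntiOn (fun t : ℝ => Real.log (1 + t) / t) (Set.Ioi 0) := by
  apply strictAntiOn_of_deriv_neg (convex_Ioi 0)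
  · apply ContinuousOn.div
    · apply ContinuousOn.log (by fun_prop)
      intro t ht
      have : (0:ℝ) < t := ht
      intro h; linarith
    · fun_prop
    · intro t ht; exact ne_of_gt ht
  · intro t ht
    rw [interior_Ioi] at ht
    have ht0 : (0:ℝ) < t := ht
    have h1t : (0:ℝ) < 1 + t := by linarith
    have hd : HasDerivAt (fun t : ℝ => Real.log (1 + t) / t)
        ((1 / (1 + t) * t - Real.log (1 + t) * 1) / t ^ 2) t := by
      have h1 : HasDerivAt (fun t : ℝ => 1 + t) 1 t := by
        simpa using (hasDerivAt_id t).const_add (1:ℝ)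
      exact (h1.log h1t.ne').div (hasDerivAt_id t) ht0.ne'
    rw [hd.deriv]
    have hlog : t / (1 + t) < Real.log (1 + t) := by
      have h := Real.log_lt_sub_one_of_pos (x := (1 + t)⁻¹) (by positivity)
        (by
          intro h
          have : (1:ℝ) + t = 1 := by
            field_simp at h
            linarith
          linarith)
      rw [Real.log_inv] at h
      have heq : (1:ℝ) - (1 + t)⁻¹ = t / (1 + t) := by field_simp; ring
      linarith [heq]
    apply div_neg_of_neg_of_pos
    · have : 1 / (1 + t) * t = t / (1 + t) := by field_simp
      rw [this]; linarith
    · positivity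

lemma integral_r_aux (τ a u : ℝ) (ha : 0 < a) (hu : 0 < u) :
    (∫ s in u..(0:ℝ), -τ * s / (1 + a * s)) =
      τ / a * u - τ / a ^ 2 * Real.log (1 + a * u) := by
  have hpos : ∀ s ∈ Set.uIcc u (0:ℝ), (0:ℝ) < 1 + a * s := by
    intro s hs
    rw [Set.uIcc_comm, Set.uIcc_of_le hu.le] at hs
    nlinarith [hs.1]
  have key : ∀ s ∈ Set.uIcc u (0:ℝ), HasDerivAt
      (fun s : ℝ => -τ / a * s + τ / a ^ 2 * Real.log (1 + a * s))
      (-τ * s / (1 + a * s)) s := by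
    intro s hs
    have hds : (0:ℝ) < 1 + a * s := hpos s hs
    have h1 : HasDerivAt (fun s : ℝ => 1 + a * s) a s := by
      simpa using ((hasDerivAt_id s).const_mul a).const_add (1:ℝ)
    have h2 : HasDerivAt (fun s : ℝ => -τ / a * s) (-τ / a) s := by
      simpa using (hasDerivAt_id s).const_mul (-τ / a)
    have h3 : HasDerivAt (fun s : ℝ => τ / a ^ 2 * Real.log (1 + a * s))
        (τ / a ^ 2 * (a / (1 + a * s))) s := (h1.log hds.ne').const_mul _
    have : HasDerivAt (fun s : ℝ => -τ / a * s + τ / a ^ 2 * Real.log (1 + a * s))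
        (-τ / a + τ / a ^ 2 * (a / (1 + a * s))) s := h2.add h3
    convert this using 1
    field_simp
    have hne : 1 + s * a ≠ 0 := by linarith
    field_simp
    ring
  have hint : IntervalIntegrable (fun s : ℝ => -τ * s / (1 + a * s))
      MeasureTheory.volume u 0 := by
    apply ContinuousOn.intervalIntegrable
    apply ContinuousOn.div (by fun_prop) (by fun_prop)
    intro s hs
    exact (hpos s hs).ne'
  have h := intervalIntegral.integral_eq_sub_of_hasDerivAt key hint
  rw [h]
  simp [Real.log_one]
  ring

theorem stmt19 (c τ : ℝ) (hc : 2 ≤ c) (hτ : τ ∈ Set.Ioc (1 : ℝ) (3/2)) :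
    StrictAntiOn (B c τ) (Set.Ioi 0) := by
  obtain ⟨hτ1, hτ2⟩ := hτ
  have hτ0 : (0:ℝ) < τ := by linarith
  set a : ℝ := 0.5 * (1 - 2/c^2) with ha_def
  have hc0 : (0:ℝ) < c := by linarith
  have hc2 : (4:ℝ) ≤ c ^ 2 := by nlinarith
  have hfrac : 2 / c ^ 2 ≤ 1 / 2 := by
    rw [div_le_div_iff₀ (by positivity) (by norm_num)]
    linarith
  have ha0 : (0:ℝ) < a := by
    rw [ha_def]
    nlinarith
  -- formula for B on (0, ∞)
  have hB : ∀ x ∈ Set.Ioi (0:ℝ), B c τ x =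
      (τ / a) * (Real.log (1 + a * (τ * x / (1 + a * x))) / (a * (τ * x / (1 + a * x))) - 1) := by
    intro x hx
    have hx0 : (0:ℝ) < x := hx
    have hden : (0:ℝ) < 1 + a * x := by nlinarith
    have hu : (0:ℝ) < τ * x / (1 + a * x) := by positivity
    rw [B]
    simp only [r]
    rw [← ha_def]
    rw [show -(-τ * x / (1 + a * x)) = τ * x / (1 + a * x) by ring]
    rw [integral_r_aux τ a _ ha0 hu]
    have hune : τ * x / (1 + a * x) ≠ 0 := hu.ne'
    field_simp
    ring
  intro x hx y hy hxy
  have hx0 : (0:ℝ) < x := hx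
  have hy0 : (0:ℝ) < y := hy
  have hdx : (0:ℝ) < 1 + a * x := by nlinarith
  have hdy : (0:ℝ) < 1 + a * y := by nlinarith
  rw [hB x hx, hB y hy]
  have htx : (0:ℝ) < a * (τ * x / (1 + a * x)) := by positivity
  have hty : (0:ℝ) < a * (τ * y / (1 + a * y)) := by positivity
  have hlt : a * (τ * x / (1 + a * x)) < a * (τ * y / (1 + a * y)) := by
    apply mul_lt_mul_of_pos_left _ ha0
    rw [div_lt_div_iff₀ hdx hdy]
    nlinarith
  have hphi := log_phi_strictAnti (Set.mem_Ioi.mpr htx) (Set.mem_Ioi.mpr hty) hlt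
  simp only at hphi
  have hτa : (0:ℝ) < τ / a := by positivity
  apply mul_lt_mul_of_pos_left _ hτa
  linarith
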